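/- For every N ≥ 2, the intersection P̄ ∩ H̄ of the 2N-dimensional crosspolytope with the codimension-2 subspace H̄ equals the convex hull of the finite set V̄. -/

import Mathlib

/-!
Every `v_{p,q,j}` lies in the convex set `P̄ ∩ H̄`. Conversely, for `x ∈ P̄ ∩ H̄` the positive and
negative parts of each column `j` have the same mass `m_j`, and transporting one onto the other
writes `x = ∑ (2 x(p,j)⁺ x(q,j)⁻ / m_j) • v_{p,q,j}` with total weight `∑ |x| ≤ 1`. Since
`0 = (v_{p,q,j} + v_{q,p,j}) / 2` lies in the hull when `N ≥ 2`, the missing weight can be put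
on `0`.
-/

open Finset

/-- The crosspolytope in `ℝ^{2N}`, identified with functions `Fin N × Fin 2 → ℝ`. -/
def crossPolytope2 (N : ℕ) : Set (Fin N × Fin 2 → ℝ) := {x | ∑ il, |x il| ≤ 1}

/-- The codimension-2 subspace `H̄ = {x : ∑_i x(i,j) = 0 for j = 1,2}`. -/
def subspaceHbar (N : ℕ) : Set (Fin N × Fin 2 → ℝ) :=
  {x | ∀ j : Fin 2, ∑ i, x (i, j) = 0}

/-- The vertex set `V̄` of vectors `v_{p,q,j}` with `p ≠ q`, `j ∈ {1,2}`. -/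
def vertexSetVbar (N : ℕ) : Set (Fin N × Fin 2 → ℝ) :=
  {v | ∃ p q : Fin N, ∃ j : Fin 2, p ≠ q ∧
    v = fun il => if il = (p, j) then (1 / 2 : ℝ) else if il = (q, j) then -(1 / 2 : ℝ) else 0}

section Transport

variable {ι E : Type*} [Fintype ι] [AddCommGroup E] [Module ℝ E]

theorem sum_sum_mul_div_eq {a b : ι → ℝ} {m : ℝ} (ha : ∑ i, a i = m) (hb : ∑ i, b i = m) :
    ∑ p, ∑ q, a p * b q / m = m := by
  simp_rw [← Finset.sum_div, ← Finset.sum_mul_sum, ha, hb, mul_self_div_self]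

theorem sum_sum_mul_div_smul_sub {a b : ι → ℝ} {m : ℝ} (ha0 : 0 ≤ a) (hb0 : 0 ≤ b)
    (ha : ∑ i, a i = m) (hb : ∑ i, b i = m) (e : ι → E) :
    ∑ p, ∑ q, (a p * b q / m) • (e p - e q) = ∑ p, a p • e p - ∑ q, b q • e q := by
  rcases eq_or_ne m 0 with rfl | hm
  · obtain rfl : a = 0 := (Fintype.sum_eq_zero_iff_of_nonneg ha0).1 ha
    obtain rfl : b = 0 := (Fintype.sum_eq_zero_iff_of_nonneg hb0).1 hb
    simp
  have hrow : ∀ p, ∑ q, a p * b q / m = a p := fun p => by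
    rw [← Finset.sum_div, ← Finset.mul_sum, hb, mul_div_cancel_right₀ _ hm]
  have hcol : ∀ q, ∑ p, a p * b q / m = b q := fun q => by
    rw [← Finset.sum_div, ← Finset.sum_mul, ha, mul_div_cancel_left₀ _ hm]
  simp only [smul_sub, Finset.sum_sub_distrib]
  rw [Finset.sum_comm (f := fun p q => (a p * b q / m) • e q)]
  simp only [← Finset.sum_smul, hrow, hcol]

end Transport

theorem Convex.sum_smul_mem_of_zero_mem {ι E : Type*} [AddCommGroup E] [Module ℝ E]
    {C : Set E} (hC : Convex ℝ C) (h0 : (0 : E) ∈ C) {t : Finset ι} {w : ι → ℝ} {z : ι → E}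
    (hw0 : ∀ i ∈ t, 0 ≤ w i) (hw1 : ∑ i ∈ t, w i ≤ 1) (hz : ∀ i ∈ t, z i ∈ C) :
    ∑ i ∈ t, w i • z i ∈ C := by
  rcases (Finset.sum_nonneg hw0).eq_or_lt with hsum | hsum
  · have hw : ∀ i ∈ t, w i = 0 := (Finset.sum_eq_zero_iff_of_nonneg hw0).1 hsum.symm
    rw [Finset.sum_eq_zero fun i hi => by rw [hw i hi, zero_smul]]
    exact h0
  have : ∑ i ∈ t, w i • z i = (∑ i ∈ t, w i) • t.centerMass w z := by
    rw [Finset.centerMass, smul_inv_smul₀ hsum.ne']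
  rw [this]
  exact (hC.starConvex h0).smul_mem (hC.centerMass_mem hw0 hsum hz) hsum.le hw1

theorem convex_setOf_sum_abs_le (ι : Type*) [Fintype ι] (r : ℝ) :
    Convex ℝ {x : ι → ℝ | ∑ i, |x i| ≤ r} := by
  intro x hx y hy a b ha hb hab
  calc ∑ i, |a * x i + b * y i| ≤ ∑ i, (a * |x i| + b * |y i|) := by
        gcongr with i
        refine (abs_add_le _ _).trans_eq ?_
        rw [abs_mul, abs_mul, abs_of_nonneg ha, abs_of_nonneg hb]
    _ = a * ∑ i, |x i| + b * ∑ i, |y i| := by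
        rw [Finset.sum_add_distrib, Finset.mul_sum, Finset.mul_sum]
    _ ≤ a * r + b * r := by gcongr <;> assumption
    _ = r := by rw [← add_mul, hab, one_mul]

section Vbar

variable {ι κ : Type*} [DecidableEq ι] [DecidableEq κ]

-- Unlike in `vertexSetVbar`, `p = q` is allowed (giving `0`), so transport sums run over all pairs.
noncomputable def vbar (p q : ι) (j : κ) : ι × κ → ℝ :=
  (1 / 2 : ℝ) • (Pi.single (p, j) 1 - Pi.single (q, j) 1)

theorem vbar_self (p : ι) (j : κ) : vbar p p j = 0 := by
  simp [vbar]

theorem vbar_swap (p q : ι) (j : κ) : vbar q p j = -vbar p q j := by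
  simp only [vbar, ← smul_neg, neg_sub]

theorem vbar_eq_ite {p q : ι} (hpq : p ≠ q) (j : κ) :
    vbar p q j =
      fun il => if il = (p, j) then (1 / 2 : ℝ) else if il = (q, j) then -(1 / 2) else 0 := by
  ext il
  by_cases hp : il = (p, j)
  · subst hp
    simp [vbar, hpq]
  · by_cases hq : il = (q, j) <;> simp [vbar, hp, hq, hpq.symm]

variable [Fintype ι]

theorem sum_vbar_apply_column (p q : ι) (j l : κ) : ∑ i, vbar p q j (i, l) = 0 := by
  by_cases hl : l = j <;>
    simp [vbar, Pi.single_apply, hl, Finset.sum_sub_distrib, ← Finset.mul_sum]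

variable [Fintype κ]

theorem sum_abs_vbar_le (p q : ι) (j : κ) : ∑ il, |vbar p q j il| ≤ 1 := by
  have hsingle (il' : ι × κ) : ∑ il, |(Pi.single il' 1 : ι × κ → ℝ) il| = 1 := by
    simp [Pi.single_apply, apply_ite]
  calc ∑ il, |vbar p q j il|
      ≤ ∑ il, (1 / 2 : ℝ) *
          (|(Pi.single (p, j) 1 : ι × κ → ℝ) il| + |(Pi.single (q, j) 1 : ι × κ → ℝ) il|) := by
        gcongr with il
        rw [vbar, Pi.smul_apply, Pi.sub_apply, smul_eq_mul, abs_mul, abs_of_pos one_half_pos]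
        gcongr
        exact abs_sub _ _
    _ = 1 := by rw [← Finset.mul_sum, Finset.sum_add_distrib, hsingle, hsingle]; norm_num

theorem exists_sum_smul_vbar_eq (x : ι × κ → ℝ) (hx : ∀ j, ∑ i, x (i, j) = 0) :
    ∃ w : κ × ι × ι → ℝ, (∀ k, 0 ≤ w k) ∧ ∑ k, w k = ∑ il, |x il| ∧
      ∑ k, w k • vbar k.2.1 k.2.2 k.1 = x := by
  obtain ⟨m, hpos⟩ : ∃ m : κ → ℝ, ∀ j, ∑ i, (x (i, j))⁺ = m j := ⟨_, fun _ => rfl⟩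
  have hm0 (j : κ) : 0 ≤ m j := hpos j ▸ Finset.sum_nonneg fun _ _ => posPart_nonneg _
  have hneg (j : κ) : ∑ i, (x (i, j))⁻ = m j := by
    rw [← hpos, eq_comm, ← sub_eq_zero, ← hx j, ← Finset.sum_sub_distrib]
    simp only [posPart_sub_negPart]
  refine ⟨fun k => 2 * ((x (k.2.1, k.1))⁺ * (x (k.2.2, k.1))⁻ / m k.1),
    fun k => by have := hm0 k.1; positivity, ?_, ?_⟩
  · have hcol (j : κ) : ∑ p, ∑ q, 2 * ((x (p, j))⁺ * (x (q, j))⁻ / m j) = ∑ i, |x (i, j)| := by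
      simp only [← Finset.mul_sum]
      rw [sum_sum_mul_div_eq (hpos j) (hneg j), two_mul]
      simp only [← posPart_add_negPart, Finset.sum_add_distrib, hpos, hneg]
    rw [Fintype.sum_prod_type_right (f := fun il => |x il|)]
    simp only [Fintype.sum_prod_type, hcol]
  · have hcol (j : κ) : ∑ p, ∑ q, (2 * ((x (p, j))⁺ * (x (q, j))⁻ / m j)) • vbar p q j =
        ∑ i, x (i, j) • (Pi.single (i, j) 1 : ι × κ → ℝ) := by
      have halve (c : ℝ) : 2 * c * (1 / 2) = c := by ring
      simp only [vbar, smul_smul, halve]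
      rw [sum_sum_mul_div_smul_sub (fun _ => posPart_nonneg _) (fun _ => negPart_nonneg _)
        (hpos j) (hneg j), ← Finset.sum_sub_distrib]
      simp only [← sub_smul, posPart_sub_negPart]
    simp only [Fintype.sum_prod_type, hcol]
    rw [← Fintype.sum_prod_type_right (f := fun il => x il • (Pi.single il 1 : ι × κ → ℝ)),
      ← pi_eq_sum_univ']

end Vbar

theorem convex_crossPolytope2 (N : ℕ) : Convex ℝ (crossPolytope2 N) :=
  convex_setOf_sum_abs_le _ 1

theorem convex_subspaceHbar (N : ℕ) : Convex ℝ (subspaceHbar N) := by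
  simp only [subspaceHbar, Set.ofPred_forall]
  exact convex_iInter fun j => convex_hyperplane
    ⟨fun x y => Finset.sum_add_distrib, fun c x => (Finset.mul_sum _ _ _).symm⟩ 0

section Vertices

variable {N : ℕ}

theorem vbar_mem_vertexSetVbar {p q : Fin N} (hpq : p ≠ q) (j : Fin 2) :
    vbar p q j ∈ vertexSetVbar N :=
  ⟨p, q, j, hpq, vbar_eq_ite hpq j⟩

theorem vertexSetVbar_subset : vertexSetVbar N ⊆ crossPolytope2 N ∩ subspaceHbar N := by
  rintro _ ⟨p, q, j, hpq, rfl⟩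
  rw [← vbar_eq_ite hpq]
  exact ⟨sum_abs_vbar_le p q j, sum_vbar_apply_column p q j⟩

theorem zero_mem_convexHull_vertexSetVbar (hN : 2 ≤ N) :
    (0 : Fin N × Fin 2 → ℝ) ∈ convexHull ℝ (vertexSetVbar N) := by
  have hpq : (⟨0, by omega⟩ : Fin N) ≠ ⟨1, by omega⟩ := by simp [Fin.ext_iff]
  have := convex_convexHull ℝ (vertexSetVbar N)
    (subset_convexHull ℝ _ (vbar_mem_vertexSetVbar hpq 0))
    (subset_convexHull ℝ _ (vbar_mem_vertexSetVbar hpq.symm 0))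
    one_half_pos.le one_half_pos.le (add_halves 1)
  rwa [vbar_swap, smul_neg, neg_add_cancel] at this

theorem vbar_mem_convexHull_vertexSetVbar (hN : 2 ≤ N) (p q : Fin N) (j : Fin 2) :
    vbar p q j ∈ convexHull ℝ (vertexSetVbar N) := by
  rcases eq_or_ne p q with rfl | hpq
  · rw [vbar_self]
    exact zero_mem_convexHull_vertexSetVbar hN
  · exact subset_convexHull ℝ _ (vbar_mem_vertexSetVbar hpq j)

end Vertices

theorem crossPolytope2_inter_subspace_eq_convexHull (N : ℕ) (hN : 2 ≤ N) :
    crossPolytope2 N ∩ subspaceHbar N = convexHull ℝ (vertexSetVbar N) := by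
  refine subset_antisymm ?_ (convexHull_min vertexSetVbar_subset
    ((convex_crossPolytope2 N).inter (convex_subspaceHbar N)))
  rintro x ⟨hxP, hxH⟩
  obtain ⟨w, hw0, hw1, rfl⟩ := exists_sum_smul_vbar_eq x hxH
  exact (convex_convexHull ℝ _).sum_smul_mem_of_zero_mem (zero_mem_convexHull_vertexSetVbar hN)
    (fun k _ => hw0 k) (hw1 ▸ hxP) (fun k _ => vbar_mem_convexHull_vertexSetVbar hN _ _ _)
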